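/- The primal feasible point x = k_d(1,1,0,1,1,0,1,1,0) with k_d = 1/(2d-1) achieves objective value Tr[(φ_d^+)^{⊗3} X] = (2d-1)/d² for the phase-covariant cloning SDP. -/

import Mathlib

open scoped BigOperators ComplexOrder
open Matrix

noncomputable section

/-- Matrix unit `|p⟩⟨q|` on the triple-index space. -/
def E3 (d : ℕ) (p q : Fin d × Fin d × Fin d) :
    Matrix (Fin d × Fin d × Fin d) (Fin d × Fin d × Fin d) ℂ :=
  Matrix.single p q 1

def X1 (d : ℕ) := ∑ i : Fin d, E3 d (i,i,i) (i,i,i)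

def X2 (d : ℕ) := ∑ i : Fin d, ∑ k : Fin d,
  if i ≠ k then E3 d (i,i,k) (i,i,k) + E3 d (i,k,i) (i,k,i) else 0

def X3 (d : ℕ) := ∑ i : Fin d, ∑ k : Fin d,
  if i ≠ k then E3 d (k,i,i) (k,i,i) else 0

def X4 (d : ℕ) := ∑ i : Fin d, ∑ k : Fin d,
  if i ≠ k then E3 d (k,i,k) (i,i,i) + E3 d (i,i,i) (k,i,k)
    + E3 d (k,k,i) (i,i,i) + E3 d (i,i,i) (k,k,i) else 0

def X5 (d : ℕ) := ∑ i : Fin d, ∑ k : Fin d,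
  if i ≠ k then E3 d (i,i,k) (i,k,i) + E3 d (i,k,i) (i,i,k) else 0

def X6 (d : ℕ) := ∑ i : Fin d, ∑ k : Fin d, ∑ l : Fin d,
  if i ≠ k ∧ k ≠ l ∧ i ≠ l then E3 d (i,k,l) (i,k,l) else 0

def X7 (d : ℕ) := ∑ i : Fin d, ∑ k : Fin d, ∑ l : Fin d,
  if i ≠ k ∧ k ≠ l ∧ i ≠ l then E3 d (k,k,l) (i,l,i) + E3 d (l,k,l) (i,i,k) else 0

def X8 (d : ℕ) := ∑ i : Fin d, ∑ k : Fin d, ∑ l : Fin d,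
  if i ≠ k ∧ k ≠ l ∧ i ≠ l then E3 d (k,k,l) (i,i,l) + E3 d (l,k,l) (i,k,i) else 0

def X9 (d : ℕ) := ∑ i : Fin d, ∑ k : Fin d, ∑ l : Fin d,
  if i ≠ k ∧ k ≠ l ∧ i ≠ l then E3 d (i,k,l) (i,l,k) else 0

/-- Partial trace over the second and third tensor factors. -/
def ptrace23 (d : ℕ)
    (M : Matrix (Fin d × Fin d × Fin d) (Fin d × Fin d × Fin d) ℂ) :
    Matrix (Fin d) (Fin d) ℂ :=
  Matrix.of fun i l => ∑ j : Fin d, ∑ k : Fin d, M (i,j,k) (l,j,k)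

/-- The projection `(φ_d^+)^{⊗3}`, whose entries are all `1/d³`. -/
def Phi3 (d : ℕ) : Matrix (Fin d × Fin d × Fin d) (Fin d × Fin d × Fin d) ℂ :=
  Matrix.of fun _ _ => 1 / (d : ℂ)^3

end

/-! Every entry of `(φ_d^+)^{⊗3}` equals `1/d³`, so the objective is `1/d³` times the sum of all
entries of `X`. Each `X_i` is a sum of matrix units, so its entry sum counts index patterns:
`d` for `X1`, `d(d-1)` per unit for `X2, X4, X5` and `d(d-1)(d-2)` per unit for `X7, X8`. Hence
the entry sum at `x = k_d(1,1,0,1,1,0,1,1,0)` is `k_d (d + 8d(d-1) + 4d(d-1)(d-2)) = k_d d(2d-1)²`. -/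

section EntrySum

variable {m n R : Type*} [Fintype m] [Fintype n] [CommSemiring R]

def entrySum : Matrix m n R →ₗ[R] R where
  toFun M := ∑ i, ∑ j, M i j
  map_add' M N := by simp only [Matrix.add_apply, Finset.sum_add_distrib]
  map_smul' c M := by
    simp only [Matrix.smul_apply, smul_eq_mul, Finset.mul_sum, RingHom.id_apply]

@[simp]
lemma entrySum_single [DecidableEq m] [DecidableEq n] (i : m) (j : n) (c : R) :
    entrySum (single i j c) = c := by
  simp [entrySum, single_apply, ite_and]

lemma trace_of_const_mul (c : R) (M : Matrix n n R) :
    (of (fun _ _ => c) * M).trace = c * entrySum M := by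
  simp only [trace, diag_apply, mul_apply, of_apply, entrySum, LinearMap.coe_mk,
    AddHom.coe_mk, Finset.mul_sum]
  exact Finset.sum_comm

end EntrySum

section Counting

variable {α R : Type*} [Fintype α] [DecidableEq α] [CommRing R]

lemma sum_sum_ite_ne (c : R) :
    ∑ i : α, ∑ k : α, (if i ≠ k then c else 0) = Fintype.card α * (Fintype.card α - 1) * c := by
  have h (i k : α) : (if i ≠ k then c else 0) = c - if i = k then c else 0 := by
    split_ifs <;> simp_all
  simp only [h, Finset.sum_sub_distrib, Finset.sum_ite_eq, Finset.mem_univ, if_true,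
    Finset.sum_const, Finset.card_univ, nsmul_eq_mul]
  ring

lemma sum_sum_sum_ite_pairwise_ne (c : R) :
    ∑ i : α, ∑ k : α, ∑ l : α, (if i ≠ k ∧ k ≠ l ∧ i ≠ l then c else 0)
      = Fintype.card α * (Fintype.card α - 1) * (Fintype.card α - 2) * c := by
  have h (i k : α) : ∑ l : α, (if i ≠ k ∧ k ≠ l ∧ i ≠ l then c else 0)
      = if i ≠ k then (Fintype.card α - 2) * c else 0 := by
    split_ifs with hik
    · have h' (l : α) : (if i ≠ k ∧ k ≠ l ∧ i ≠ l then c else 0)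
          = c - (if k = l then c else 0) - if i = l then c else 0 := by
        split_ifs <;> simp_all
      simp only [h', Finset.sum_sub_distrib, Finset.sum_ite_eq, Finset.mem_univ, if_true,
        Finset.sum_const, Finset.card_univ, nsmul_eq_mul]
      ring
    · simp_all
  simp only [h, sum_sum_ite_ne]
  ring

end Counting

lemma entrySum_X1 (d : ℕ) : entrySum (X1 d) = (d : ℂ) := by
  simp [X1, E3, map_sum]

lemma entrySum_X2 (d : ℕ) : entrySum (X2 d) = (d * (d - 1) * 2 : ℂ) := by
  simp only [X2, E3, map_sum, apply_ite entrySum, map_add, entrySum_single, map_zero,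
    sum_sum_ite_ne, Fintype.card_fin, one_add_one_eq_two]

lemma entrySum_X4 (d : ℕ) : entrySum (X4 d) = (d * (d - 1) * 4 : ℂ) := by
  simp only [X4, E3, map_sum, apply_ite entrySum, map_add, entrySum_single, map_zero,
    sum_sum_ite_ne, Fintype.card_fin]
  ring

lemma entrySum_X5 (d : ℕ) : entrySum (X5 d) = (d * (d - 1) * 2 : ℂ) := by
  simp only [X5, E3, map_sum, apply_ite entrySum, map_add, entrySum_single, map_zero,
    sum_sum_ite_ne, Fintype.card_fin, one_add_one_eq_two]

lemma entrySum_X7 (d : ℕ) : entrySum (X7 d) = (d * (d - 1) * (d - 2) * 2 : ℂ) := by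
  simp only [X7, E3, map_sum, apply_ite entrySum, map_add, entrySum_single, map_zero,
    sum_sum_sum_ite_pairwise_ne, Fintype.card_fin, one_add_one_eq_two]

lemma entrySum_X8 (d : ℕ) : entrySum (X8 d) = (d * (d - 1) * (d - 2) * 2 : ℂ) := by
  simp only [X8, E3, map_sum, apply_ite entrySum, map_add, entrySum_single, map_zero,
    sum_sum_sum_ite_pairwise_ne, Fintype.card_fin, one_add_one_eq_two]

lemma entrySum_primal_point (d : ℕ) :
    entrySum (X1 d + X2 d + X4 d + X5 d + X7 d + X8 d) = d * (2 * (d : ℂ) - 1) ^ 2 := by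
  simp only [map_add, entrySum_X1, entrySum_X2, entrySum_X4, entrySum_X5, entrySum_X7,
    entrySum_X8]
  ring

theorem primal_objective_value_general (d : ℕ) :
    (Phi3 d * ((2 * (d : ℂ) - 1)⁻¹ •
        (X1 d + X2 d + X4 d + X5 d + X7 d + X8 d))).trace
      = (2 * (d : ℂ) - 1) / (d : ℂ)^2 := by
  have hk : 2 * (d : ℂ) - 1 ≠ 0 := by
    rw [show 2 * (d : ℂ) - 1 = ((2 * d - 1 : ℤ) : ℂ) by push_cast; ring]
    exact_mod_cast (by omega : (2 * d - 1 : ℤ) ≠ 0)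
  rw [Phi3, trace_of_const_mul, map_smul, entrySum_primal_point, smul_eq_mul]
  rcases eq_or_ne (d : ℂ) 0 with hd | hd
  · simp [hd]
  · field_simp

/-- the primal feasible point `x = k_d(1,1,0,1,1,0,1,1,0)`, `k_d = 1/(2d-1)`,
achieves objective value `(2d-1)/d²`. -/
theorem primal_objective_value (d : ℕ) (hd : 2 ≤ d) :
    (Phi3 d * ((2 * (d : ℂ) - 1)⁻¹ •
        (X1 d + X2 d + X4 d + X5 d + X7 d + X8 d))).trace
      = (2 * (d : ℂ) - 1) / (d : ℂ)^2 :=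
  primal_objective_value_general d
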